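/- Let Γ be a connected Coxeter graph of spherical type with vertex set S = {s₁,…,s_n}, and let X ⊊ S be a proper subset. Then Z(A_Γ) ∩ A_X = {1}, where Z(A_Γ) is the infinite cyclic group generated by δ = (σ₁⋯σ_n)^h with h the Coxeter number of (W_Γ, S). -/

import Mathlib

/-- The alternating word `s t s t ⋯` of length `m`, as an element of the free group. -/
def altWord {S : Type} (s t : S) : ℕ → FreeGroup S
  | 0 => 1
  | n + 1 => FreeGroup.of s * altWord t s n

/-- The braid relations of an Artin-Tits group (`0` entries encoding `∞`). -/
def artinRels {S : Type} (M : CoxeterMatrix S) : Set (FreeGroup S) :=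
  {r | ∃ s t : S, s ≠ t ∧ M s t ≠ 0 ∧
    r = altWord s t (M s t) * (altWord t s (M s t))⁻¹}

/-- The Artin-Tits group of a Coxeter matrix. -/
abbrev ArtinTits {S : Type} (M : CoxeterMatrix S) : Type := PresentedGroup (artinRels M)

/-- The Coxeter graph of a Coxeter matrix: vertices are the elements of `S`, and two
distinct vertices `u, v` are adjacent iff `m_{u,v} ≥ 3` (including `m_{u,v} = ∞`,
encoded by `0`), i.e. iff `M u v ≠ 2`. -/
def coxGraph {S : Type} (M : CoxeterMatrix S) : SimpleGraph S where
  Adj u v := u ≠ v ∧ M u v ≠ 2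
  symm := ⟨by
    rintro u v ⟨h1, h2⟩
    exact ⟨h1.symm, by rwa [M.symmetric v u]⟩⟩
  loopless := ⟨fun u hu => hu.1 rfl⟩


/-!
The assignment `σᵢ ↦ ([sᵢ], sᵢ)` respects the braid relations and so defines a homomorphism
`A_Γ → ℤ[W] ⋊ W`, with `W` acting on `ℤ[W]` by conjugating the basis. The `ℤ[W]`-part of the
image of a positive word is the sum of its left inversion sequence `s₁, s₁s₂s₁, …`, so for
`c = s₁ ⋯ sₙ` of order `h` the image of `δ` is `(∑_{i<h} c^i · N, 1)`, with `N` that sum for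
`s₁ ⋯ sₙ`: its coefficients are nonnegative, and positive on the left inversion sequence. The
image of `A_X` consists of pairs supported in `W_X`, so if a nontrivial power of `δ` lay in `A_X`,
the whole left inversion sequence, hence every `sᵢ`, would lie in `W_X`. That fails for `t ∉ X`:
in the geometric representation `W_X` only moves vectors within `span {α_x | x ∈ X}`, while
`s_t α_t = -α_t`.
-/

open Real Module Finsupp CoxeterSystem

theorem SemidirectProduct.left_pow {N G : Type*} [CommGroup N] [Group G] {φ : G →* MulAut N}
    (x : N ⋊[φ] G) (k : ℕ) : (x ^ k).left = ∏ i ∈ Finset.range k, φ (x.right ^ i) x.left := by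
  induction k with
  | zero => rfl
  | succ k ih =>
    rw [pow_succ, mul_left, ih, Finset.prod_range_succ, ← rightHom_eq_right, map_pow]

theorem SemidirectProduct.left_zpow_of_right_eq_one {N G : Type*} [Group N] [Group G]
    {φ : G →* MulAut N} {x : N ⋊[φ] G} (hx : x.right = 1) (k : ℤ) :
    (x ^ k).left = x.left ^ k := by
  obtain ⟨n, rfl⟩ : ∃ n, x = inl n := ⟨x.left, by ext <;> simp [hx]⟩
  rw [← map_zpow, left_inl, left_inl]

theorem List.sum_map_single_one_apply {α : Type*} [DecidableEq α] (L : List α) (a : α) :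
    (L.map fun b => single b (1 : ℤ)).sum a = L.count a := by
  induction L with
  | nil => simp
  | cons b L ih =>
    simp only [List.map_cons, List.sum_cons, Finsupp.add_apply, ih, single_apply, List.count_cons]
    split_ifs <;> simp_all [add_comm]

namespace Finsupp

variable (W : Type*) [Group W]

noncomputable def domConj : W →* MulAut (Multiplicative (W →₀ ℤ)) where
  toFun w := AddEquiv.toMultiplicative (Finsupp.domCongr (MulAut.conj w).toEquiv)
  map_one' := by ext v q; simp [-map_one, MulAut.conj_symm_apply]
  map_mul' w w' := by ext v q; simp [-map_mul, MulAut.conj_symm_apply, mul_assoc]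

variable {W}

@[simp] theorem toAdd_domConj_apply (w : W) (v : Multiplicative (W →₀ ℤ)) (q : W) :
    (domConj W w v).toAdd q = v.toAdd (w⁻¹ * q * w) := by
  simp [domConj]

theorem domConj_ofAdd_single (w t : W) (n : ℤ) :
    domConj W w (.ofAdd (single t n)) = .ofAdd (single (w * t * w⁻¹) n) := by
  simp [domConj]

theorem domConj_ofAdd_sum_map_single (w : W) (L : List W) :
    domConj W w (.ofAdd (L.map fun t => single t (1 : ℤ)).sum)
      = .ofAdd ((L.map (MulAut.conj w)).map fun t => single t (1 : ℤ)).sum := by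
  induction L with
  | nil => simp
  | cons a L ih =>
    simp only [List.map_cons, List.sum_cons, ofAdd_add, map_mul, ih, domConj_ofAdd_single,
      MulAut.conj_apply]

theorem toAdd_domConj_mem_supported {H : Subgroup W} {w : W} (hw : w ∈ H)
    {v : Multiplicative (W →₀ ℤ)} (hv : v.toAdd ∈ supported ℤ ℤ (H : Set W)) :
    (domConj W w v).toAdd ∈ supported ℤ ℤ (H : Set W) := by
  rw [mem_supported'] at hv ⊢
  intro q hq
  rw [toAdd_domConj_apply]
  refine hv _ fun hq' => hq ?_
  simpa [mul_assoc] using H.mul_mem (H.mul_mem hw hq') (H.inv_mem hw)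

end Finsupp

/-- `ℤ[W] ⋊ W`, with `W` acting on the group ring by conjugating its basis; the group ring is
written multiplicatively, as `SemidirectProduct` requires. -/
abbrev ConjSemidirect (W : Type*) [Group W] := Multiplicative (W →₀ ℤ) ⋊[domConj W] W

def ConjSemidirect.supportedSubgroup {W : Type*} [Group W] (H : Subgroup W) :
    Subgroup (ConjSemidirect W) where
  carrier := {p | p.right ∈ H ∧ p.left.toAdd ∈ supported ℤ ℤ (H : Set W)}
  one_mem' := ⟨H.one_mem, zero_mem _⟩
  mul_mem' := fun ⟨hp, hp'⟩ ⟨hq, hq'⟩ =>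
    ⟨H.mul_mem hp hq, add_mem hp' (toAdd_domConj_mem_supported hp hq')⟩
  inv_mem' := fun ⟨hp, hp'⟩ =>
    ⟨H.inv_mem hp, toAdd_domConj_mem_supported (H.inv_mem hp) (neg_mem hp')⟩

section Dihedral

variable {V : Type*} [AddCommGroup V] [Module ℝ V]

theorem LinearEquiv.pow_apply_of_rotation {T : V ≃ₗ[ℝ] V} {e₁ e₂ : V} {φ : ℝ}
    (h₁ : T e₁ = cos φ • e₁ + sin φ • e₂) (h₂ : T e₂ = -sin φ • e₁ + cos φ • e₂) (k : ℕ) :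
    (T ^ k) e₁ = cos (k * φ) • e₁ + sin (k * φ) • e₂ ∧
      (T ^ k) e₂ = -sin (k * φ) • e₁ + cos (k * φ) • e₂ := by
  induction k with
  | zero => simp
  | succ k ih =>
    simp only [pow_succ', LinearEquiv.mul_apply, ih.1, ih.2, map_add, map_smul, h₁, h₂,
      Nat.cast_succ, add_mul, one_mul, cos_add, sin_add]
    constructor <;> module

theorem LinearEquiv.eq_one_of_apply_eq_self {T : V ≃ₗ[ℝ] V} {x y : V} {f g : Dual ℝ V}
    (hdet : f x * g y - f y * g x ≠ 0) (hTx : T x = x) (hTy : T y = y)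
    (hT : ∀ z, f z = 0 → g z = 0 → T z = z) : T = 1 := by
  ext v
  generalize hd : f x * g y - f y * g x = d at hdet
  set a := (f v * g y - g v * f y) / d
  set b := (g v * f x - f v * g x) / d
  have hfz : f (v - a • x - b • y) = 0 := by
    simp only [map_sub, LinearMap.map_smul, smul_eq_mul, a, b]
    field_simp
    linear_combination (-f v) * hd
  have hgz : g (v - a • x - b • y) = 0 := by
    simp only [map_sub, LinearMap.map_smul, smul_eq_mul, a, b]
    field_simp
    linear_combination (-g v) * hd
  have hv : v = a • x + b • y + (v - a • x - b • y) := by abel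
  show T v = v
  rw [hv, map_add, map_add, map_smul, map_smul, hTx, hTy, hT _ hfz hgz]

theorem Module.reflection_mul_reflection_pow_eq_one {x y : V} {f g : Dual ℝ V}
    (hf : f x = 2) (hg : g y = 2) {m : ℕ} (hm : 2 ≤ m)
    (hfy : f y = -2 * cos (π / m)) (hgx : g x = -2 * cos (π / m)) :
    (reflection hf * reflection hg) ^ m = 1 := by
  set θ := π / m
  set c := cos θ
  set s := sin θ
  have hs : s ≠ 0 := by
    refine (sin_pos_of_pos_of_lt_pi (by positivity) ?_).ne'
    exact div_lt_self pi_pos (by exact_mod_cast hm)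
  have hsc : s ^ 2 = 1 - c ^ 2 := sin_sq θ
  set T := reflection hf * reflection hg
  -- `x, e₂` is orthonormal for the form with `B(x, x) = B(y, y) = 1`, `B(x, y) = -cos θ`, and `T`
  -- is the rotation by `2θ` in this basis.
  obtain ⟨e₂, he₂⟩ : ∃ e₂, e₂ = s⁻¹ • (c • x + y) := ⟨_, rfl⟩
  have hx : T x = cos (2 * θ) • x + sin (2 * θ) • e₂ := by
    simp only [T, he₂, LinearEquiv.mul_apply, reflection_apply, map_sub, map_smul, hf, hgx, hfy,
      cos_two_mul, sin_two_mul]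
    match_scalars <;> field_simp <;> ring
  have he : T e₂ = -sin (2 * θ) • x + cos (2 * θ) • e₂ := by
    simp only [T, he₂, LinearEquiv.mul_apply, reflection_apply, map_sub, map_smul, map_add, hf, hg,
      hgx, hfy, cos_two_mul, sin_two_mul]
    match_scalars
    · field_simp; linear_combination (2 * c) * hsc
    · field_simp; ring1
  have h2π : (m : ℝ) * (2 * θ) = 2 * π := by
    have : (m : ℝ) ≠ 0 := by positivity
    simp only [θ]; field_simp
  obtain ⟨hTx, hTe⟩ := LinearEquiv.pow_apply_of_rotation hx he m
  rw [h2π, cos_two_pi, sin_two_pi, one_smul, zero_smul, add_zero] at hTx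
  rw [h2π, cos_two_pi, sin_two_pi, one_smul, neg_zero, zero_smul, zero_add] at hTe
  have hy : y = s • e₂ - c • x := by rw [he₂, smul_smul, mul_inv_cancel₀ hs]; module
  refine LinearEquiv.eq_one_of_apply_eq_self (f := f) (g := g) (x := x) (y := y) ?_ hTx ?_ ?_
  · rw [hf, hg, hfy, hgx]
    nlinarith [sq_pos_of_ne_zero hs]
  · rw [hy, map_sub, map_smul, map_smul, hTx, hTe]
  · intro z hfz hgz
    rw [LinearEquiv.pow_apply]
    exact Function.iterate_fixed (by simp [T, reflection_apply, hfz, hgz]) m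

end Dihedral

def Submodule.displacementSubgroup {R V : Type*} [Ring R] [AddCommGroup V] [Module R V]
    (U : Submodule R V) : Subgroup (V ≃ₗ[R] V) where
  carrier := {T | ∀ v, T v - v ∈ U}
  one_mem' v := by simp
  mul_mem' {S T} hS hT v := by
    simpa [LinearEquiv.mul_apply] using U.add_mem (hS (T v)) (hT v)
  inv_mem' {T} hT v := by
    simpa using U.neg_mem (hT (T⁻¹ v))

theorem Module.reflection_mem_displacementSubgroup {R V : Type*} [CommRing R] [AddCommGroup V]
    [Module R V] {U : Submodule R V} {x : V} {f : Dual R V} (hf : f x = 2) (hx : x ∈ U) :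
    reflection hf ∈ U.displacementSubgroup := fun v => by
  rw [reflection_apply, sub_sub_cancel_left]
  exact U.neg_mem (U.smul_mem _ hx)

namespace CoxeterMatrix

variable {B : Type*} (M : CoxeterMatrix B)

/-- The functional `2 B(αᵢ, ·)` of the Tits bilinear form `B(αᵢ, αⱼ) = -cos (π / mᵢⱼ)`. For
`mᵢⱼ = ∞`, encoded by `M i j = 0`, the junk value `π / 0 = 0` gives the correct `-cos 0`. -/
noncomputable def titsForm (i : B) : Dual ℝ (B →₀ ℝ) :=
  Finsupp.linearCombination ℝ fun j => -2 * cos (π / M i j)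

theorem titsForm_single (i j : B) : M.titsForm i (single j 1) = -2 * cos (π / M i j) := by
  simp [titsForm]

theorem titsForm_single_self (i : B) : M.titsForm i (single i 1) = 2 := by
  simp [titsForm_single]

noncomputable def geomReflection (i : B) : (B →₀ ℝ) ≃ₗ[ℝ] (B →₀ ℝ) :=
  reflection (M.titsForm_single_self i)

theorem isLiftable_geomReflection : M.IsLiftable M.geomReflection := by
  intro i j
  rcases eq_or_ne i j with rfl | hij
  · rw [M.diagonal, pow_one]
    exact LinearEquiv.ext (involutive_reflection (M.titsForm_single_self i))
  rcases eq_or_ne (M i j) 0 with h0 | h0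
  · rw [h0, pow_zero]
  have h2 : 2 ≤ M i j := by have := M.off_diagonal i j hij; omega
  exact reflection_mul_reflection_pow_eq_one _ _ h2 (M.titsForm_single i j)
    (by rw [titsForm_single, M.symmetric])

end CoxeterMatrix

theorem altWord_eq_prod_reverse_alternatingWord {S : Type} (s t : S) (m : ℕ) :
    altWord s t m = ((alternatingWord t s m).reverse.map FreeGroup.of).prod := by
  induction m generalizing s t with
  | zero => rfl
  | succ m ih => simp [altWord, alternatingWord_succ, ih]

namespace CoxeterSystem

variable {B : Type} {W : Type*} [Group W] {M : CoxeterMatrix B} (cs : CoxeterSystem M W)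

theorem leftInvSeq_reverse_alternatingWord (i j : B) (m : ℕ) :
    cs.leftInvSeq (alternatingWord i j m).reverse
      = (List.range m).map fun k => (cs.simple j * cs.simple i) ^ k * cs.simple j := by
  induction m generalizing i j with
  | zero => rfl
  | succ m ih =>
    simp only [alternatingWord_succ, List.concat_eq_append, List.reverse_append,
      List.reverse_singleton, List.singleton_append, leftInvSeq, ih, List.map_map,
      List.range_succ_eq_map, pow_zero, one_mul, List.map_cons, List.cons.injEq, true_and]
    refine List.map_congr_left fun k _ => ?_
    simp only [Function.comp_apply, MulAut.conj_apply, inv_simple, pow_succ', mul_assoc,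
      mul_pow_mul]

theorem leftInvSeq_reverse_braidWord (i j : B) :
    cs.leftInvSeq (alternatingWord i j (M i j)).reverse
      = (cs.leftInvSeq (alternatingWord j i (M i j)).reverse).reverse := by
  rw [leftInvSeq_reverse_alternatingWord, leftInvSeq_reverse_alternatingWord]
  refine List.ext_getElem (by simp) fun k hk _ => ?_
  simp only [List.length_map, List.length_range] at hk
  simp only [List.getElem_map, List.getElem_range, List.getElem_reverse, List.length_map,
    List.length_range]
  have hinv : (cs.simple i * cs.simple j) ^ (M i j - 1 - k)
      = (cs.simple j * cs.simple i) ^ (k + 1) := calc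
    _ = ((cs.simple i * cs.simple j) ^ (k + 1))⁻¹ := eq_inv_of_mul_eq_one_left <| by
      rw [← pow_add, show M i j - 1 - k + (k + 1) = M i j by omega, cs.simple_mul_simple_pow]
    _ = (cs.simple j * cs.simple i) ^ (k + 1) := by
      rw [← inv_pow, mul_inv_rev, inv_simple, inv_simple]
  rw [hinv, pow_succ, mul_assoc, mul_assoc, simple_mul_simple_self, mul_one]

theorem simple_mem_of_leftInvSeq_subset {H : Subgroup W} {ω : List B}
    (hω : ∀ t ∈ cs.leftInvSeq ω, t ∈ H) {i : B} (hi : i ∈ ω) : cs.simple i ∈ H := by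
  induction ω with
  | nil => simp at hi
  | cons a ω ih =>
    have ha : cs.simple a ∈ H := hω _ List.mem_cons_self
    obtain rfl | hi := List.mem_cons.mp hi
    · exact ha
    refine ih (fun t ht => ?_) hi
    have hconj : cs.simple a * t * cs.simple a ∈ H := by
      simpa using hω _ (List.mem_cons_of_mem _ (List.mem_map_of_mem ht))
    simpa [mul_assoc] using H.mul_mem (H.mul_mem ha hconj) ha

theorem simple_notMem_closure_simple_image {X : Set B} {t : B} (ht : t ∉ X) :
    cs.simple t ∉ Subgroup.closure (cs.simple '' X) := by
  set ρ := cs.lift ⟨M.geomReflection, M.isLiftable_geomReflection⟩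
  have hρ (i : B) : ρ (cs.simple i) = M.geomReflection i := cs.lift_apply_simple _ i
  have hle : Subgroup.closure (cs.simple '' X)
      ≤ (supported ℝ ℝ X).displacementSubgroup.comap ρ := by
    rw [Subgroup.closure_le]
    rintro _ ⟨x, hx, rfl⟩
    rw [SetLike.mem_coe, Subgroup.mem_comap, hρ]
    exact reflection_mem_displacementSubgroup _ (single_mem_supported ℝ 1 hx)
  intro hmem
  have h := hle hmem (single t 1)
  rw [hρ, CoxeterMatrix.geomReflection, reflection_apply_self] at h
  have := (mem_supported' ℝ _).1 h t ht
  norm_num at this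

noncomputable def leftInvSeqSum (ω : List B) : W →₀ ℤ :=
  ((cs.leftInvSeq ω).map fun t => single t 1).sum

noncomputable def cocycleGen (i : B) : ConjSemidirect W :=
  ⟨.ofAdd (single (cs.simple i) 1), cs.simple i⟩

theorem prod_map_cocycleGen (ω : List B) :
    (ω.map cs.cocycleGen).prod = ⟨.ofAdd (cs.leftInvSeqSum ω), cs.wordProd ω⟩ := by
  induction ω with
  | nil => rfl
  | cons i ω ih =>
    rw [List.map_cons, List.prod_cons, ih, SemidirectProduct.mul_def]
    simp only [cocycleGen, leftInvSeqSum, wordProd_cons, leftInvSeq, List.map_cons, List.sum_cons,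
      ofAdd_add, domConj_ofAdd_sum_map_single]

theorem lift_cocycleGen_eq_one_of_mem_artinRels {r : FreeGroup B} (hr : r ∈ artinRels M) :
    FreeGroup.lift cs.cocycleGen r = 1 := by
  obtain ⟨i, j, -, -, rfl⟩ := hr
  simp only [map_mul, map_inv, mul_inv_eq_one, altWord_eq_prod_reverse_alternatingWord,
    map_list_prod, List.map_map, Function.comp_def, FreeGroup.lift_apply_of, prod_map_cocycleGen]
  rw [leftInvSeqSum, leftInvSeqSum, leftInvSeq_reverse_braidWord, List.map_reverse,
    List.sum_reverse, wordProd_reverse, wordProd_reverse]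
  have hbraid := cs.wordProd_braidWord_eq j i
  rw [braidWord, braidWord, M.symmetric j i] at hbraid
  rw [hbraid]

noncomputable def cocycleHom : ArtinTits M →* ConjSemidirect W :=
  PresentedGroup.toGroup fun _ => cs.lift_cocycleGen_eq_one_of_mem_artinRels

theorem cocycleHom_of (i : B) : cs.cocycleHom (PresentedGroup.of i) = cs.cocycleGen i :=
  PresentedGroup.toGroup.of _

theorem cocycleHom_prod_map_of (ω : List B) :
    cs.cocycleHom (ω.map PresentedGroup.of).prod
      = ⟨.ofAdd (cs.leftInvSeqSum ω), cs.wordProd ω⟩ := by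
  rw [map_list_prod, List.map_map, Function.comp_def]
  simp only [cocycleHom_of]
  exact cs.prod_map_cocycleGen ω

theorem closure_image_of_le_comap_cocycleHom (X : Set B) :
    Subgroup.closure (PresentedGroup.of '' X : Set (ArtinTits M))
      ≤ (ConjSemidirect.supportedSubgroup (Subgroup.closure (cs.simple '' X))).comap
          cs.cocycleHom := by
  rw [Subgroup.closure_le]
  rintro _ ⟨x, hx, rfl⟩
  have hsx : cs.simple x ∈ Subgroup.closure (cs.simple '' X) :=
    Subgroup.subset_closure ⟨x, hx, rfl⟩
  rw [SetLike.mem_coe, Subgroup.mem_comap, cocycleHom_of]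
  exact ⟨hsx, single_mem_supported ℤ 1 hsx⟩

theorem toAdd_left_pow_cocycleHom_apply_pos {ω : List B} {h : ℕ} (hpos : 0 < h) {u : W}
    (hu : u ∈ cs.leftInvSeq ω) :
    0 < ((cs.cocycleHom (ω.map PresentedGroup.of).prod) ^ h).left.toAdd u := by
  classical
  rw [cocycleHom_prod_map_of, SemidirectProduct.left_pow, toAdd_prod, Finset.sum_apply']
  simp only [toAdd_domConj_apply, toAdd_ofAdd, leftInvSeqSum, List.sum_map_single_one_apply]
  refine Finset.sum_pos' (fun _ _ => Int.natCast_nonneg _) ⟨0, Finset.mem_range.mpr hpos, ?_⟩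
  simpa using hu

theorem zpowers_pow_inf_closure_eq_bot {ω : List B} {X : Set B} {t : B} (htω : t ∈ ω)
    (htX : t ∉ X) {h : ℕ} (hh : cs.wordProd ω ^ h = 1) :
    Subgroup.zpowers ((ω.map PresentedGroup.of).prod ^ h : ArtinTits M)
      ⊓ Subgroup.closure (PresentedGroup.of '' X) = ⊥ := by
  rw [eq_bot_iff]
  rintro _ ⟨⟨k, rfl⟩, hX⟩
  rw [Subgroup.mem_bot]
  rcases h.eq_zero_or_pos with rfl | hpos
  · simp
  by_contra hne
  have hk : k ≠ 0 := by rintro rfl; exact hne (zpow_zero _)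
  have hright : (cs.cocycleHom (ω.map PresentedGroup.of).prod ^ h).right = 1 := by
    rw [← SemidirectProduct.rightHom_eq_right, map_pow, SemidirectProduct.rightHom_eq_right,
      cocycleHom_prod_map_of, hh]
  obtain ⟨-, hsupp⟩ := cs.closure_image_of_le_comap_cocycleHom X hX
  refine cs.simple_notMem_closure_simple_image htX
    (cs.simple_mem_of_leftInvSeq_subset (fun u hu => ?_) htω)
  by_contra hu'
  have h0 := (mem_supported' ℤ _).1 hsupp u hu'
  rw [map_zpow, map_pow, SemidirectProduct.left_zpow_of_right_eq_one hright, toAdd_zpow,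
    Finsupp.smul_apply, smul_eq_mul] at h0
  exact mul_ne_zero hk (cs.toAdd_left_pow_cocycleHom_apply_pos hpos hu).ne' h0

end CoxeterSystem

theorem center_inter_parabolic_eq_bot_general {S : Type} [Fintype S] (M : CoxeterMatrix S)
    (e : Fin (Fintype.card S) ≃ S)
    (h : ℕ) (hh : h = orderOf ((List.ofFn fun i => M.simple (e i)).prod))
    (δ : ArtinTits M)
    (hδ : δ = ((List.ofFn fun i => (PresentedGroup.of (e i) : ArtinTits M)).prod) ^ h)
    (hZ : Subgroup.center (ArtinTits M) = Subgroup.zpowers δ)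
    (X : Set S) (hX : X ≠ Set.univ) :
    Subgroup.center (ArtinTits M)
        ⊓ Subgroup.closure (Set.range fun x : X => (PresentedGroup.of (x : S) : ArtinTits M))
      = ⊥ := by
  obtain ⟨t, ht⟩ := (Set.ne_univ_iff_exists_notMem X).mp hX
  have hc : M.toCoxeterSystem.wordProd (List.ofFn e) ^ h = 1 := by
    rw [hh, CoxeterSystem.wordProd, List.map_ofFn]
    exact pow_orderOf_eq_one _
  have hofFn : (List.ofFn fun i => (PresentedGroup.of (e i) : ArtinTits M))
      = (List.ofFn e).map PresentedGroup.of := by rw [List.map_ofFn]; rfl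
  rw [hZ, hδ, hofFn, ← Set.image_eq_range]
  exact M.toCoxeterSystem.zpowers_pow_inf_closure_eq_bot
    (List.mem_ofFn.mpr ⟨e.symm t, e.apply_symm_apply t⟩) ht hc

/-- Lemma 3.1. Let `Γ` be a connected spherical-type Coxeter graph
with vertices `s₁, …, s_n`, and let `X ⊊ S`.  Then `Z(A_Γ) ∩ A_X = {1}`, where
`Z(A_Γ)` is the infinite cyclic subgroup generated by `δ = (σ₁ ⋯ σ_n)^h`, `h` being
the Coxeter number of `(W_Γ, S)` (the order of a Coxeter element of `W_Γ`). -/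
theorem center_inter_parabolic_eq_bot {S : Type} [Fintype S] (M : CoxeterMatrix S)
    (hconn : (coxGraph M).Connected)
    (hspherical : Finite M.Group)
    (e : Fin (Fintype.card S) ≃ S)
    (h : ℕ) (hh : h = orderOf ((List.ofFn fun i => M.simple (e i)).prod))
    (δ : ArtinTits M)
    (hδ : δ = ((List.ofFn fun i => (PresentedGroup.of (e i) : ArtinTits M)).prod) ^ h)
    (hZ : Subgroup.center (ArtinTits M) = Subgroup.zpowers δ)
    (X : Set S) (hX : X ≠ Set.univ) :
    Subgroup.center (ArtinTits M)
        ⊓ Subgroup.closure (Set.range fun x : X => (PresentedGroup.of (x : S) : ArtinTits M))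
      = ⊥ :=
  center_inter_parabolic_eq_bot_general M e h hh δ hδ hZ X hX
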